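/- The function ξ ↦ (1 - |ξ|)₊² e^{-iKξ} on ℝ (where (·)₊ denotes the positive part) is the Fourier transform of the function λ ↦ (2/π) · (λ - K - sin(λ - K)) / (λ - K)³, i.e., ∫_ℝ (2/π)((λ-K-sin(λ-K))/(λ-K)³) e^{-iλξ} dλ = (1-|ξ|)₊² e^{-iKξ} for all ξ ∈ ℝ. -/

import Mathlib

open MeasureTheory Complex

/-- The Fejér-type kernel `F_K(λ) = (2/π)(λ - K - sin(λ-K))/(λ-K)³`, extended
continuously by the value `1/(3π)` at `λ = K`. -/
noncomputable def fejerKernel (K : ℝ) (l : ℝ) : ℝ :=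
  if l = K then 1 / (3 * Real.pi)
  else (2 / Real.pi) * (l - K - Real.sin (l - K)) / (l - K) ^ 3

/-!
Translating `λ` by `K` multiplies the transform by `e^{-iKξ}`, so it suffices to treat `K = 0`.
The inverse transform of the compactly supported function `(1 - |ξ|)₊²` is elementary:
by symmetry it is `2 ∫₀¹ (1 - t)² cos (x t) dt = 4 (x - sin x) / x³ = 2π F₀(x)`.
Since `|x - sin x| ≤ |x|³ / 6` near `0`, `F₀` is bounded and decays like `x⁻²`, hence is
integrable, and Fourier inversion recovers `(1 - |ξ|)₊²` as the transform of `F₀`.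
-/

open scoped FourierTransform Real

/-- Fourier inversion in the angular-frequency convention `f̂(ξ) = ∫ f(x) e^{-ixξ} dx`. -/
theorem integral_mul_cexp_neg_eq_of_integral_mul_cexp_eq {f φ : ℝ → ℂ} (hf : Continuous f)
    (hfi : Integrable f) (hφ : Integrable φ)
    (hfφ : ∀ x : ℝ, ∫ t, f t * exp (I * x * t) = 2 * π * φ x) (ξ : ℝ) :
    ∫ x, φ x * exp (-I * x * ξ) = f ξ := by
  have h2π : (2 * π : ℝ) ≠ 0 := by positivity
  have hinv : 𝓕⁻ f = fun u ↦ 2 * π * φ (2 * π * u) := by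
    ext u
    rw [Real.fourierInv_eq', ← hfφ]
    congr 1 with t
    simp only [RCLike.inner_apply, conj_trivial, smul_eq_mul]
    push_cast
    ring_nf
  have hfourier_int : Integrable (𝓕 f) := by
    have : 𝓕 f = fun w ↦ 2 * π * φ (2 * π * -w) := by
      ext w
      rw [← neg_neg w, ← Real.fourierInv_eq_fourier_neg, hinv, neg_neg]
    rw [this]
    exact ((hφ.comp_mul_left' h2π).comp_neg).const_mul _
  calc ∫ x, φ x * exp (-I * x * ξ)
      = ∫ u, 2 * π * φ (2 * π * u) * exp (-I * ↑(2 * π * u) * ξ) := by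
        simp_rw [mul_assoc (2 * π : ℂ), integral_const_mul]
        rw [Measure.integral_comp_mul_left (fun x ↦ φ x * exp (-I * x * ξ)) (2 * π),
          abs_of_pos (by positivity), Complex.real_smul, ← mul_assoc]
        push_cast
        field_simp
        simp only [mul_right_comm I]
    _ = 𝓕 (𝓕⁻ f) ξ := by
        rw [hinv, Real.fourier_real_eq_integral_exp_smul]
        congr 1 with u
        simp only [smul_eq_mul]
        push_cast
        ring_nf
    _ = f ξ := by rw [hf.fourier_fourierInv_eq hfi hfourier_int]

lemma integrable_max_one_sub_abs_sq : Integrable (fun t : ℝ ↦ max (1 - |t|) 0 ^ 2) := by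
  refine Continuous.integrable_of_hasCompactSupport (by fun_prop)
    (HasCompactSupport.intro (isCompact_Icc (a := -1) (b := 1)) fun t ht ↦ ?_)
  rw [Set.mem_Icc, ← abs_le, not_le] at ht
  simp [max_eq_right (sub_nonpos.2 ht.le)]

lemma integral_max_one_sub_abs_sq_mul_cexp (x : ℝ) :
    ∫ t : ℝ, ((max (1 - |t|) 0 ^ 2 : ℝ) : ℂ) * exp (I * x * t) =
      ((2 * ∫ t in (0 : ℝ)..1, (1 - t) ^ 2 * Real.cos (x * t) : ℝ) : ℂ) := by
  set f : ℝ → ℂ := fun t ↦ ((max (1 - |t|) 0 ^ 2 : ℝ) : ℂ) * exp (I * x * t)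
  have hf : Continuous f := by fun_prop
  have hsupp : ∀ t ∉ Set.Ioc (-1 : ℝ) 1, f t = 0 := by
    intro t ht
    have : 1 ≤ |t| := by
      contrapose! ht
      exact ⟨(abs_lt.1 ht).1, (abs_lt.1 ht).2.le⟩
    simp [f, max_eq_right (sub_nonpos.2 this)]
  have hsym : ∀ t ∈ Set.uIcc (0 : ℝ) 1,
      f (-t) + f t = ((2 * ((1 - t) ^ 2 * Real.cos (x * t)) : ℝ) : ℂ) := by
    intro t ht
    rw [Set.uIcc_of_le zero_le_one] at ht
    simp only [f, abs_neg, abs_of_nonneg ht.1, max_eq_left (sub_nonneg.2 ht.2)]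
    push_cast
    rw [Complex.cos]
    ring_nf
  rw [← setIntegral_eq_integral_of_forall_compl_eq_zero hsupp,
    ← intervalIntegral.integral_of_le (by norm_num),
    ← intervalIntegral.integral_add_adjacent_intervals (b := 0) (hf.intervalIntegrable _ _)
      (hf.intervalIntegrable _ _),
    ← neg_zero, ← intervalIntegral.integral_comp_neg, neg_zero,
    ← intervalIntegral.integral_add (f := fun t ↦ f (-t))
      ((hf.comp continuous_neg).intervalIntegrable _ _) (hf.intervalIntegrable _ _),
    intervalIntegral.integral_congr hsym, intervalIntegral.integral_ofReal,
    intervalIntegral.integral_const_mul]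

lemma hasDerivAt_antideriv_one_sub_sq_mul_cos {x : ℝ} (hx : x ≠ 0) (t : ℝ) :
    HasDerivAt (fun t ↦ (1 - t) ^ 2 * Real.sin (x * t) / x
      - 2 * (1 - t) * Real.cos (x * t) / x ^ 2 - 2 * Real.sin (x * t) / x ^ 3)
      ((1 - t) ^ 2 * Real.cos (x * t)) t := by
  have hlin : HasDerivAt (fun t ↦ 1 - t) (-1) t := by
    simpa using (hasDerivAt_id t).const_sub 1
  have hxt : HasDerivAt (fun t ↦ x * t) x t := by simpa using (hasDerivAt_id t).const_mul x
  refine ((((hlin.pow 2).mul hxt.sin).div_const x).sub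
    (((hlin.const_mul 2).mul hxt.cos).div_const (x ^ 2))).sub
      ((hxt.sin.const_mul 2).div_const (x ^ 3)) |>.congr_deriv ?_
  simp only [Pi.pow_apply]
  field_simp
  ring

lemma integral_one_sub_sq_mul_cos (x : ℝ) :
    ∫ t in (0 : ℝ)..1, (1 - t) ^ 2 * Real.cos (x * t) = π * fejerKernel 0 x := by
  rcases eq_or_ne x 0 with rfl | hx
  · simp [fejerKernel, intervalIntegral.integral_comp_sub_left (fun t ↦ t ^ 2)]
    field_simp
    norm_num
  · rw [intervalIntegral.integral_eq_sub_of_hasDerivAt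
      (fun t _ ↦ hasDerivAt_antideriv_one_sub_sq_mul_cos hx t)
      (by apply Continuous.intervalIntegrable; fun_prop)]
    simp [fejerKernel, hx]
    field_simp
    ring

lemma abs_sub_sin_mul_one_add_sq_le (x : ℝ) : |x - Real.sin x| * (1 + x ^ 2) ≤ 4 * |x| ^ 3 := by
  have hx2 : x ^ 2 = |x| ^ 2 := (sq_abs x).symm
  rcases le_total |x| 1 with hx | hx
  · have := Real.abs_sub_sin_le x
    have : x ^ 2 ≤ 1 := by nlinarith [abs_nonneg x]
    nlinarith [abs_nonneg (x - Real.sin x), pow_nonneg (abs_nonneg x) 3]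
  · have : |x - Real.sin x| ≤ 2 * |x| := by
      linarith [abs_sub x (Real.sin x), Real.abs_sin_le_one x]
    nlinarith [abs_nonneg (x - Real.sin x)]

lemma abs_fejerKernel_zero_le (x : ℝ) : |fejerKernel 0 x| ≤ 8 / π * (1 + x ^ 2)⁻¹ := by
  rcases eq_or_ne x 0 with rfl | hx
  · simp only [fejerKernel, if_pos, abs_of_pos (by positivity : 0 < 1 / (3 * π))]
    field_simp
    norm_num
  · have hx3 : 0 < |x| ^ 3 := by positivity
    simp only [fejerKernel, if_neg hx, sub_zero]
    calc |2 / π * (x - Real.sin x) / x ^ 3| = 2 / π * |x - Real.sin x| / |x| ^ 3 := by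
          rw [abs_div, abs_mul, abs_pow, abs_of_pos (by positivity : 0 < 2 / π)]
      _ ≤ 2 / π * (4 * |x| ^ 3 * (1 + x ^ 2)⁻¹) / |x| ^ 3 := by
          gcongr
          rw [le_mul_inv_iff₀ (by positivity)]
          exact abs_sub_sin_mul_one_add_sq_le x
      _ = 8 / π * (1 + x ^ 2)⁻¹ := by
          field_simp
          ring

lemma measurable_fejerKernel (K : ℝ) : Measurable (fejerKernel K) :=
  Measurable.ite (measurableSet_singleton K) measurable_const (by fun_prop)

lemma integrable_fejerKernel_zero : Integrable (fun x ↦ (fejerKernel 0 x : ℂ)) := by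
  refine (integrable_inv_one_add_sq.const_mul (8 / π)).mono'
    (measurable_fejerKernel 0).complex_ofReal.aestronglyMeasurable (ae_of_all _ fun x ↦ ?_)
  rw [norm_real, Real.norm_eq_abs]
  exact abs_fejerKernel_zero_le x

lemma fejerKernel_eq_fejerKernel_zero_sub (K l : ℝ) :
    fejerKernel K l = fejerKernel 0 (l - K) := by
  simp [fejerKernel, sub_eq_zero]

lemma integral_fejerKernel_zero_mul_cexp (ξ : ℝ) :
    ∫ l : ℝ, (fejerKernel 0 l : ℂ) * exp (-I * l * ξ) =
      ((max (1 - |ξ|) 0 ^ 2 : ℝ) : ℂ) :=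
  integral_mul_cexp_neg_eq_of_integral_mul_cexp_eq
    (f := fun t ↦ ((max (1 - |t|) 0 ^ 2 : ℝ) : ℂ)) (by fun_prop)
    integrable_max_one_sub_abs_sq.ofReal integrable_fejerKernel_zero (fun x ↦ by
      rw [integral_max_one_sub_abs_sq_mul_cexp, integral_one_sub_sq_mul_cos]
      push_cast
      ring) ξ

/-- The Fourier transform of `F_K` is `ξ ↦ (1-|ξ|)₊² e^{-iKξ}`:
`∫ F_K(λ) e^{-iλξ} dλ = (1-|ξ|)₊² e^{-iKξ}` for all `ξ ∈ ℝ`. -/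
theorem fourier_fejerKernel (K : ℝ) (ξ : ℝ) :
    (∫ l : ℝ, (fejerKernel K l : ℂ) * Complex.exp (-Complex.I * l * ξ)) =
      (((max (1 - |ξ|) 0) ^ 2 : ℝ) : ℂ) * Complex.exp (-Complex.I * K * ξ) := by
  rw [← integral_fejerKernel_zero_mul_cexp, ← integral_mul_const,
    ← integral_add_right_eq_self _ K]
  congr 1 with l
  rw [fejerKernel_eq_fejerKernel_zero_sub, add_sub_cancel_right, mul_assoc _ (exp _), ← exp_add]
  push_cast
  ring_nf
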